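/- The reflected line passes through the point of incidence: let ξ₀, ξ₁, η₀, η₁ ∈ ℂ and r₀ ∈ ℝ with Δ := (1 − ξ₀·conj(ξ₀))·conj(ξ₁) − 2·conj(ξ₀) ≠ 0, and suppose the intersection equation η₁ = ((1 + conj(ξ₀)ξ₁)²·η₀ − (ξ₀ − ξ₁)²·conj(η₀))/(1 + ξ₀·conj(ξ₀))² + (ξ₀ − ξ₁)(1 + conj(ξ₀)ξ₁)·r₀/(1 + ξ₀·conj(ξ₀)) holds. Define the reflected line by ξ = (2ξ₀·conj(ξ₁) + 1 − ξ₀·conj(ξ₀))/Δ and η = (−(1 + ξ₀·conj(ξ₀))²·conj(η₁) + 2(conj(ξ₀) − conj(ξ₁))(1 + ξ₀·conj(ξ₁))(1 + ξ₀·conj(ξ₀))·r₀)/Δ². Then there exists r ∈ ℝ with Φ(ξ,η,r) = Φ(ξ₀,η₀,r₀). -/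

import Mathlib

open Complex ComplexConjugate

/-- The map `Φ` sending an oriented line with coordinates `(ξ, η)` and affine
parameter `r` to the corresponding point of `ℝ³ ≃ ℂ × ℝ`. -/
noncomputable def Phi (ξ η : ℂ) (r : ℝ) : ℂ × ℝ :=
  ((2 * (η - conj η * ξ ^ 2) + 2 * ξ * (1 + ξ * conj ξ) * (r : ℂ)) / (1 + ξ * conj ξ) ^ 2,
   (((-2) * (η * conj ξ + conj η * ξ) + (1 - ξ ^ 2 * (conj ξ) ^ 2) * (r : ℂ)) /
      (1 + ξ * conj ξ) ^ 2).re)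

/-- The direction map: the unit vector in `ℝ³ ≃ ℂ × ℝ` with stereographic coordinate `ξ`. -/
noncomputable def dmap (ξ : ℂ) : ℂ × ℝ :=
  (2 * ξ / ((1 : ℂ) + (Complex.normSq ξ : ℂ)),
   (1 - Complex.normSq ξ) / (1 + Complex.normSq ξ))

/-- The Euclidean inner product on `ℝ³ ≃ ℂ × ℝ`. -/
noncomputable def inner3 (p q : ℂ × ℝ) : ℝ := (p.1 * conj q.1).re + p.2 * q.2

/-!
A point `p = (z, t)` lies on the oriented line `(ξ, η)` exactly when
`η = (z - 2 t ξ - z̄ ξ²) / 2`, and then `p = Φ(ξ, η, r)` where `r` is the component of `p`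
along the unit direction of the line. Since this expression in `ξ` involves no `ξ̄`, checking that
the reflected line passes through `Φ(ξ₀, η₀, r₀)` reduces, once the denominators `Δ²` and
`(1 + |ξ₀|²)²` are cleared, to a polynomial identity in `ξ₀, ξ̄₀, ξ₁, ξ̄₁, η₀, η̄₀, r₀`.
-/

theorem one_add_mul_conj_ne_zero (ξ : ℂ) : 1 + ξ * conj ξ ≠ 0 := by
  rw [mul_conj]
  exact_mod_cast (by linarith [normSq_nonneg ξ] : (0 : ℝ) < 1 + normSq ξ).ne'

theorem ofReal_Phi_snd (ξ η : ℂ) (r : ℝ) :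
    ((Phi ξ η r).2 : ℂ) =
      ((-2) * (η * conj ξ + conj η * ξ) + (1 - ξ ^ 2 * (conj ξ) ^ 2) * (r : ℂ)) /
        (1 + ξ * conj ξ) ^ 2 := by
  refine conj_eq_iff_re.mp ?_
  simp only [map_div₀, map_add, map_sub, map_mul, map_pow, map_one, map_neg, map_ofNat,
    conj_conj, conj_ofReal]
  ring

theorem ofReal_inner3_dmap (p : ℂ × ℝ) (ξ : ℂ) :
    (inner3 p (dmap ξ) : ℂ) =
      (p.1 * conj ξ + conj p.1 * ξ + (1 - ξ * conj ξ) * p.2) / (1 + ξ * conj ξ) := by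
  have hd := one_add_mul_conj_ne_zero ξ
  rw [mul_conj] at hd ⊢
  simp only [inner3, dmap]
  push_cast
  rw [re_eq_add_conj]
  simp only [map_mul, map_div₀, map_add, map_one, map_ofNat, conj_conj, conj_ofReal]
  field_simp

/-- The `η`-coordinate of the oriented line with direction `ξ` through the point `p`. -/
noncomputable def lineEta (ξ : ℂ) (p : ℂ × ℝ) : ℂ :=
  (p.1 - 2 * p.2 * ξ - conj p.1 * ξ ^ 2) / 2

theorem Phi_lineEta_inner3_dmap (ξ : ℂ) (p : ℂ × ℝ) :
    Phi ξ (lineEta ξ p) (inner3 p (dmap ξ)) = p := by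
  have hd := one_add_mul_conj_ne_zero ξ
  refine Prod.ext ?_ (ofReal_injective ?_)
  · simp only [Phi, lineEta, ofReal_inner3_dmap, map_div₀, map_sub, map_mul, map_pow,
      map_ofNat, conj_conj, conj_ofReal]
    field_simp
    ring
  · rw [ofReal_Phi_snd, ofReal_inner3_dmap]
    simp only [lineEta, map_div₀, map_sub, map_mul, map_pow, map_ofNat, conj_conj, conj_ofReal]
    field_simp
    ring

theorem reflected_eta_eq_lineEta (ξ₀ ξ₁ η₀ η₁ Δ ξ η : ℂ) (r₀ : ℝ)
    (hΔdef : Δ = (1 - ξ₀ * conj ξ₀) * conj ξ₁ - 2 * conj ξ₀) (hΔ : Δ ≠ 0)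
    (hint : η₁ = ((1 + conj ξ₀ * ξ₁) ^ 2 * η₀ - (ξ₀ - ξ₁) ^ 2 * conj η₀) /
        (1 + ξ₀ * conj ξ₀) ^ 2
      + (ξ₀ - ξ₁) * (1 + conj ξ₀ * ξ₁) * (r₀ : ℂ) / (1 + ξ₀ * conj ξ₀))
    (hξ : ξ = (2 * ξ₀ * conj ξ₁ + 1 - ξ₀ * conj ξ₀) / Δ)
    (hη : η = (-(1 + ξ₀ * conj ξ₀) ^ 2 * conj η₁
      + 2 * (conj ξ₀ - conj ξ₁) * (1 + ξ₀ * conj ξ₁) * (1 + ξ₀ * conj ξ₀) * (r₀ : ℂ)) /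
        Δ ^ 2) :
    η = lineEta ξ (Phi ξ₀ η₀ r₀) := by
  have h₀ := one_add_mul_conj_ne_zero ξ₀
  subst hξ hη hint
  rw [lineEta, ofReal_Phi_snd]
  simp only [Phi, map_div₀, map_add, map_sub, map_mul, map_pow, map_one, map_ofNat,
    conj_conj, conj_ofReal]
  field_simp
  rw [hΔdef]
  ring

/-- The reflected line passes through the point of incidence: under the intersection
equation, the reflected line `(ξ,η)` contains the point `Φ(ξ₀,η₀,r₀)`. -/
theorem reflected_line_through_incidence (ξ₀ ξ₁ η₀ η₁ Δ ξ η : ℂ) (r₀ : ℝ)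
    (hΔdef : Δ = (1 - ξ₀ * conj ξ₀) * conj ξ₁ - 2 * conj ξ₀) (hΔ : Δ ≠ 0)
    (hint : η₁ = ((1 + conj ξ₀ * ξ₁) ^ 2 * η₀ - (ξ₀ - ξ₁) ^ 2 * conj η₀) /
        (1 + ξ₀ * conj ξ₀) ^ 2
      + (ξ₀ - ξ₁) * (1 + conj ξ₀ * ξ₁) * (r₀ : ℂ) / (1 + ξ₀ * conj ξ₀))
    (hξ : ξ = (2 * ξ₀ * conj ξ₁ + 1 - ξ₀ * conj ξ₀) / Δ)
    (hη : η = (-(1 + ξ₀ * conj ξ₀) ^ 2 * conj η₁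
      + 2 * (conj ξ₀ - conj ξ₁) * (1 + ξ₀ * conj ξ₁) * (1 + ξ₀ * conj ξ₀) * (r₀ : ℂ)) /
        Δ ^ 2) :
    ∃ r : ℝ, Phi ξ η r = Phi ξ₀ η₀ r₀ := by
  rw [reflected_eta_eq_lineEta ξ₀ ξ₁ η₀ η₁ Δ ξ η r₀ hΔdef hΔ hint hξ hη]
  exact ⟨_, Phi_lineEta_inner3_dmap ξ (Phi ξ₀ η₀ r₀)⟩
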